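/- arXiv:1903.11838 — 5 statements merged into one kernel-verified Lean document; each statement's English description precedes it below -/
import Mathlib

section
/- The exponential integral E₁ satisfies ∫₀^∞ E₁(r)² dr = 2 log 2, where E₁(z) = ∫₁^∞ e^{-tz}/t dt for z > 0. -/
/-!
Writing `E₁(r)²` as a double integral over `(1, ∞)²` of `e^{-(s+t)r} / (st)` and integrating
in `r` first (Tonelli, in `ℝ≥0∞` so that no integrability bookkeeping is needed) leaves
`∫∫ ds dt / ((s+t)st)`. The `t`-integral is `log (1+s) / s²`, and an antiderivative of that is
`log s - log (s+1) - log (s+1) / s`, which gives `2 log 2`.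
-/

open MeasureTheory Real Set Filter Topology

theorem lintegral_Ioi_ofReal_of_hasDerivAt {f F : ℝ → ℝ} {a l : ℝ}
    (hF : ∀ x ∈ Ici a, HasDerivAt F (f x) x) (hf : ∀ x ∈ Ioi a, 0 ≤ f x)
    (hl : Tendsto F atTop (𝓝 l)) :
    ∫⁻ x in Ioi a, ENNReal.ofReal (f x) = ENNReal.ofReal (l - F a) := by
  rw [← ofReal_integral_eq_lintegral_ofReal (integrableOn_Ioi_deriv_of_nonneg' hF hf hl)
    ((ae_restrict_iff' measurableSet_Ioi).2 (.of_forall hf)),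
    integral_Ioi_of_hasDerivAt_of_nonneg' hF hf hl]

theorem ofReal_integral_sq_eq_lintegral_prod {α : Type*} [MeasurableSpace α] {μ : Measure α}
    [SFinite μ] {f : α → ℝ} (hf : Integrable f μ) (hf₀ : 0 ≤ᵐ[μ] f) :
    ENNReal.ofReal ((∫ x, f x ∂μ) ^ 2) =
      ∫⁻ p, ENNReal.ofReal (f p.1) * ENNReal.ofReal (f p.2) ∂μ.prod μ := by
  have hm := hf.aemeasurable.ennreal_ofReal
  rw [sq, ENNReal.ofReal_mul (integral_nonneg_of_ae hf₀), lintegral_prod_mul hm hm,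
    ofReal_integral_eq_lintegral_ofReal hf hf₀]

theorem lintegral_Ioi_zero_ofReal_exp_neg_mul_div_mul {s t : ℝ} (hs : 0 < s) (ht : 0 < t) :
    ∫⁻ r in Ioi 0, ENNReal.ofReal (exp (-s * r) / s) * ENNReal.ofReal (exp (-t * r) / t) =
      ENNReal.ofReal (1 / ((s + t) * (s * t))) := by
  have hst : 0 < s + t := by positivity
  have hprod (r : ℝ) : ENNReal.ofReal (exp (-s * r) / s) * ENNReal.ofReal (exp (-t * r) / t) =
      ENNReal.ofReal (exp (-(s + t) * r) / (s * t)) := by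
    rw [← ENNReal.ofReal_mul (by positivity), div_mul_div_comm, ← exp_add]
    ring_nf
  simp_rw [hprod]
  rw [← ofReal_integral_eq_lintegral_ofReal ((exp_neg_integrableOn_Ioi 0 hst).div_const _)
    (.of_forall fun r => by positivity), integral_div,
    integral_exp_mul_Ioi (neg_neg_of_pos hst)]
  congr 1
  field_simp
  simp

theorem lintegral_Ioi_one_ofReal_one_div_add_mul_mul {s : ℝ} (hs : 0 < s) :
    ∫⁻ t in Ioi 1, ENNReal.ofReal (1 / ((s + t) * (s * t))) =
      ENNReal.ofReal (log (s + 1) / s ^ 2) := by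
  have hF : ∀ t ∈ Ici (1 : ℝ), HasDerivAt (fun t => -(log (t + s) - log t) / s ^ 2)
      (1 / ((s + t) * (s * t))) t := by
    intro t ht
    have ht₀ : 0 < t := zero_lt_one.trans_le ht
    have hts : 0 < t + s := by positivity
    refine ((((hasDerivAt_id' t).add_const s).log hts.ne').sub
      (hasDerivAt_log ht₀.ne')).neg.div_const (s ^ 2) |>.congr_deriv ?_
    field_simp
    ring
  have hl : Tendsto (fun t => -(log (t + s) - log t) / s ^ 2) atTop (𝓝 0) := by
    simpa using ((tendsto_log_comp_add_sub_log s).neg.div_const (s ^ 2))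
  rw [lintegral_Ioi_ofReal_of_hasDerivAt hF
    (fun t ht => by have : 0 < t := zero_lt_one.trans ht; positivity) hl]
  congr 1
  simp [add_comm, neg_div]

theorem tendsto_log_add_one_div_atTop :
    Tendsto (fun x => log (x + 1) / x) atTop (𝓝 0) := by
  have h := ((tendsto_log_comp_add_sub_log 1).div_atTop tendsto_id).add
    isLittleO_log_id_atTop.tendsto_div_nhds_zero
  rw [zero_add] at h
  refine h.congr' ?_
  filter_upwards [eventually_ne_atTop 0] with x hx
  simp only [id]
  ring

theorem lintegral_Ioi_one_ofReal_log_add_one_div_sq :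
    ∫⁻ s in Ioi 1, ENNReal.ofReal (log (s + 1) / s ^ 2) = ENNReal.ofReal (2 * log 2) := by
  have hF : ∀ s ∈ Ici (1 : ℝ), HasDerivAt (fun s => log s - log (s + 1) - log (s + 1) / s)
      (log (s + 1) / s ^ 2) s := by
    intro s hs
    have hs₀ : 0 < s := zero_lt_one.trans_le hs
    have hs₁ : 0 < s + 1 := by positivity
    have hlog := ((hasDerivAt_id' s).add_const 1).log hs₁.ne'
    refine ((hasDerivAt_log hs₀.ne').sub hlog).sub (hlog.div (hasDerivAt_id' s) hs₀.ne')
      |>.congr_deriv ?_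
    field_simp
    ring
  have hl : Tendsto (fun s => log s - log (s + 1) - log (s + 1) / s) atTop (𝓝 0) := by
    simpa using (tendsto_log_comp_add_sub_log 1).neg.sub tendsto_log_add_one_div_atTop
  rw [lintegral_Ioi_ofReal_of_hasDerivAt hF (fun s hs => by
    have : 0 ≤ log (s + 1) := log_nonneg (by linarith [hs.out])
    positivity) hl]
  congr 1
  norm_num
  ring

theorem integrableOn_exp_neg_mul_div_Ioi_one {r : ℝ} (hr : 0 < r) :
    IntegrableOn (fun t => exp (-t * r) / t) (Ioi 1) := by
  refine (exp_neg_integrableOn_Ioi 1 hr).mono'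
    (Measurable.aestronglyMeasurable (by fun_prop)) ?_
  filter_upwards [ae_restrict_mem measurableSet_Ioi] with t (ht : 1 < t)
  rw [norm_of_nonneg (by positivity), neg_mul_comm, mul_comm]
  exact div_le_self (exp_pos _).le ht.le

theorem lintegral_Ioi_zero_ofReal_integral_exp_neg_mul_div_sq :
    ∫⁻ r in Ioi 0, ENNReal.ofReal ((∫ t in Ioi 1, exp (-t * r) / t) ^ 2) =
      ENNReal.ofReal (2 * log 2) := by
  set μ : Measure ℝ := volume.restrict (Ioi 1)
  have hsq : ∀ᵐ r ∂volume.restrict (Ioi 0),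
      ENNReal.ofReal ((∫ t, exp (-t * r) / t ∂μ) ^ 2) =
        ∫⁻ p, ENNReal.ofReal (exp (-p.1 * r) / p.1) * ENNReal.ofReal (exp (-p.2 * r) / p.2)
          ∂μ.prod μ := by
    filter_upwards [ae_restrict_mem measurableSet_Ioi] with r (hr : 0 < r)
    refine ofReal_integral_sq_eq_lintegral_prod (integrableOn_exp_neg_mul_div_Ioi_one hr) ?_
    filter_upwards [ae_restrict_mem measurableSet_Ioi] with t (ht : 1 < t)
    positivity
  have hinner : ∀ᵐ p ∂μ.prod μ,
      ∫⁻ r in Ioi 0,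
          ENNReal.ofReal (exp (-p.1 * r) / p.1) * ENNReal.ofReal (exp (-p.2 * r) / p.2) =
        ENNReal.ofReal (1 / ((p.1 + p.2) * (p.1 * p.2))) := by
    rw [Measure.prod_restrict]
    filter_upwards [ae_restrict_mem (measurableSet_Ioi.prod measurableSet_Ioi)]
      with p ⟨hs, ht⟩
    exact lintegral_Ioi_zero_ofReal_exp_neg_mul_div_mul (zero_lt_one.trans hs)
      (zero_lt_one.trans ht)
  have hmeas : Measurable fun q : ℝ × ℝ × ℝ =>
      ENNReal.ofReal (exp (-q.2.1 * q.1) / q.2.1) *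
        ENNReal.ofReal (exp (-q.2.2 * q.1) / q.2.2) := by
    fun_prop
  calc ∫⁻ r in Ioi 0, ENNReal.ofReal ((∫ t, exp (-t * r) / t ∂μ) ^ 2)
      = ∫⁻ p, (∫⁻ r in Ioi 0,
          ENNReal.ofReal (exp (-p.1 * r) / p.1) * ENNReal.ofReal (exp (-p.2 * r) / p.2))
          ∂μ.prod μ := by
        rw [lintegral_congr_ae hsq, lintegral_lintegral_swap hmeas.aemeasurable]
    _ = ∫⁻ s in Ioi 1, ∫⁻ t in Ioi 1, ENNReal.ofReal (1 / ((s + t) * (s * t))) := by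
        rw [lintegral_congr_ae hinner, lintegral_prod _ (by fun_prop)]
    _ = ∫⁻ s in Ioi 1, ENNReal.ofReal (log (s + 1) / s ^ 2) :=
        setLIntegral_congr_fun measurableSet_Ioi fun s (hs : 1 < s) =>
          lintegral_Ioi_one_ofReal_one_div_add_mul_mul (zero_lt_one.trans hs)
    _ = ENNReal.ofReal (2 * log 2) := lintegral_Ioi_one_ofReal_log_add_one_div_sq

/-- `∫₀^∞ E₁(r)² dr = 2 log 2`, where `E₁ z = ∫₁^∞ e^{-tz}/t dt`. -/
theorem integral_expInt_sq (E₁ : ℝ → ℝ)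
    (hE₁ : ∀ z : ℝ, 0 < z → E₁ z = ∫ t in Set.Ioi (1:ℝ), Real.exp (-t * z) / t) :
    ∫ r in Set.Ioi (0:ℝ), (E₁ r) ^ 2 = 2 * Real.log 2 := by
  have hmeas : Measurable fun r => ∫ t in Ioi 1, exp (-t * r) / t :=
    ((measurable_snd.neg.mul measurable_fst).exp.div measurable_snd).stronglyMeasurable
      |>.integral_prod_right' |>.measurable
  rw [setIntegral_congr_fun measurableSet_Ioi fun r hr => by rw [hE₁ r hr],
    integral_eq_lintegral_of_nonneg_ae (.of_forall fun r => sq_nonneg _)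
      (hmeas.pow_const 2).aestronglyMeasurable,
    lintegral_Ioi_zero_ofReal_integral_exp_neg_mul_div_sq,
    ENNReal.toReal_ofReal (by positivity)]
end

section
/- For z > 0, E₁(z) = -log z - γ + Ein(z), where Ein(z) = ∫₀^z (1-e^{-t})/t dt and γ is the Euler–Mascheroni constant. -/
/-!
Substituting `u = t z` turns `E₁ z` into `∫_z^∞ e^{-t}/t dt`. The antiderivatives
`e^{-t} log t` on `(z, ∞)` and `(1 - e^{-t}) log t` on `(0, z)` express `E₁ z` and `Ein z` through
the integrals of `e^{-t} log t` over these two pieces; the boundary terms add up to `-log z`, and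
the two pieces add up to `∫_0^∞ e^{-t} log t = Γ'(1) = -γ`.
-/

open MeasureTheory Set Filter Topology Real Asymptotics

local notation "γ" => Real.eulerMascheroniConstant

theorem abs_log_le_two_mul_rpow_add_self {t : ℝ} (ht : 0 < t) :
    |log t| ≤ 2 * t ^ ((1:ℝ) / 2 - 1) + t := by
  have hpos : 0 < t ^ ((1:ℝ) / 2 - 1) := rpow_pos_of_pos ht _
  have hupper : log t ≤ t - 1 := log_le_sub_one_of_pos ht
  have hlower : ((1:ℝ) / 2 - 1) * log t ≤ t ^ ((1:ℝ) / 2 - 1) - 1 :=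
    log_rpow ht _ ▸ log_le_sub_one_of_pos hpos
  rw [abs_le]
  constructor <;> linarith

theorem integrableOn_exp_neg_mul_log : IntegrableOn (fun t => exp (-t) * log t) (Ioi 0) := by
  -- the majorant is `2 ×` the `Γ(1/2)` integrand plus the `Γ(2)` integrand
  refine (((GammaIntegral_convergent one_half_pos).const_mul 2).add
    (GammaIntegral_convergent two_pos)).mono' (by fun_prop) ?_
  filter_upwards [ae_restrict_mem measurableSet_Ioi] with t (ht : 0 < t)
  rw [norm_mul, norm_of_nonneg (exp_pos _).le, norm_eq_abs]
  calc exp (-t) * |log t| ≤ exp (-t) * (2 * t ^ ((1:ℝ) / 2 - 1) + t) :=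
        mul_le_mul_of_nonneg_left (abs_log_le_two_mul_rpow_add_self ht) (exp_pos _).le
    _ = 2 * (exp (-t) * t ^ ((1:ℝ) / 2 - 1)) + exp (-t) * t ^ ((2:ℝ) - 1) := by norm_num; ring

theorem integral_exp_neg_mul_log : ∫ t in Ioi (0:ℝ), exp (-t) * log t = -γ := by
  have hre : (0:ℝ) < (1:ℂ).re := by simp
  have hGamma : Complex.Gamma =ᶠ[𝓝 1] Complex.GammaIntegral := by
    filter_upwards [(isOpen_lt continuous_const Complex.continuous_re).mem_nhds hre]
      with s hs using Complex.Gamma_eq_integral hs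
  have h := ((Complex.hasDerivAt_GammaIntegral hre).congr_of_eventuallyEq hGamma).unique
    Complex.hasDerivAt_Gamma_one
  simp only [sub_self, Complex.cpow_zero, one_mul, ← Complex.ofReal_mul] at h
  simp_rw [mul_comm (exp _)]
  exact_mod_cast h

theorem integral_Ioi_comp_mul_right_div_self (f : ℝ → ℝ) (a : ℝ) {b : ℝ} (hb : 0 < b) :
    ∫ t in Ioi a, f (t * b) / t = ∫ t in Ioi (a * b), f t / t := by
  calc ∫ t in Ioi a, f (t * b) / t = b * ∫ t in Ioi a, f (t * b) / (t * b) := by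
        rw [← integral_const_mul]
        congr 1 with t
        rw [mul_div_assoc', mul_comm b, mul_div_mul_right _ _ hb.ne']
    _ = ∫ t in Ioi (a * b), f t / t := by
        rw [integral_comp_mul_right_Ioi (fun t => f t / t) a hb, smul_eq_mul,
          mul_inv_cancel_left₀ hb.ne']

theorem integrableOn_exp_neg_div_self {a : ℝ} (ha : 0 < a) :
    IntegrableOn (fun t => exp (-t) / t) (Ioi a) := by
  refine ((exp_neg_integrableOn_Ioi a one_pos).const_mul a⁻¹).mono'
    (by fun_prop : Measurable fun t => exp (-t) / t).aestronglyMeasurable ?_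
  filter_upwards [ae_restrict_mem measurableSet_Ioi] with t (ht : a < t)
  rw [norm_of_nonneg (div_nonneg (exp_pos _).le (ha.trans ht).le), neg_one_mul,
    ← div_eq_inv_mul]
  gcongr

theorem tendsto_exp_neg_mul_log_atTop : Tendsto (fun t => exp (-t) * log t) atTop (𝓝 0) := by
  have h : (fun t => exp (-t) * log t) =O[atTop] fun t => t ^ 1 * exp (-t) := by
    simpa only [pow_one, id_eq, mul_comm (exp _)] using
      (isBigO_refl (fun t => exp (-t)) atTop).mul isLittleO_log_id_atTop.isBigO
  exact h.trans_tendsto (tendsto_pow_mul_exp_neg_atTop_nhds_zero 1)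

theorem tendsto_one_sub_exp_neg_mul_log_nhdsGT_zero :
    Tendsto (fun t => (1 - exp (-t)) * log t) (𝓝[>] 0) (𝓝 0) := by
  have hexp : HasDerivAt (fun t => 1 - exp (-t)) 1 0 := by
    simpa using ((hasDerivAt_neg 0).exp).const_sub 1
  have h : (fun t => (1 - exp (-t)) * log t) =O[𝓝[>] 0] fun t => log t * t ^ (1:ℝ) := by
    simpa [mul_comm (log _)] using
      (hexp.isBigO_sub.mono nhdsWithin_le_nhds).mul (isBigO_refl log (𝓝[>] 0))
  exact h.trans_tendsto (tendsto_log_mul_rpow_nhdsGT_zero one_pos)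

theorem integral_Ioi_exp_neg_div_self {a : ℝ} (ha : 0 < a) :
    ∫ t in Ioi a, exp (-t) / t = (∫ t in Ioi a, exp (-t) * log t) - exp (-a) * log a := by
  have hdiv := integrableOn_exp_neg_div_self ha
  have hlog := integrableOn_exp_neg_mul_log.mono_set (Ioi_subset_Ioi ha.le)
  have hderiv : ∀ t ∈ Ici a, HasDerivAt (fun t => exp (-t) * log t)
      (exp (-t) / t - exp (-t) * log t) t := by
    intro t (ht : a ≤ t)
    exact ((hasDerivAt_neg t).exp.fun_mul (hasDerivAt_log (ha.trans_le ht).ne')).congr_deriv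
      (by ring)
  have h := integral_Ioi_of_hasDerivAt_of_tendsto' hderiv (hdiv.sub hlog)
    tendsto_exp_neg_mul_log_atTop
  rw [integral_sub hdiv hlog] at h
  linarith

theorem intervalIntegrable_one_sub_exp_neg_div_self {a : ℝ} (ha : 0 ≤ a) :
    IntervalIntegrable (fun t => (1 - exp (-t)) / t) volume 0 a := by
  rw [intervalIntegrable_iff_integrableOn_Ioc_of_le ha]
  refine (integrableOn_const measure_Ioc_lt_top.ne (C := (1:ℝ))).mono'
    (by fun_prop : Measurable fun t => (1 - exp (-t)) / t).aestronglyMeasurable ?_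
  filter_upwards [ae_restrict_mem measurableSet_Ioc] with t ht
  have hle : 1 - exp (-t) ≤ t := by linarith [add_one_le_exp (-t)]
  have hnonneg : 0 ≤ 1 - exp (-t) := sub_nonneg.mpr (exp_le_one_iff.mpr (by linarith [ht.1]))
  rw [norm_of_nonneg (div_nonneg hnonneg ht.1.le), div_le_one ht.1]
  exact hle

theorem integral_one_sub_exp_neg_div_self {a : ℝ} (ha : 0 < a) :
    ∫ t in 0..a, (1 - exp (-t)) / t
      = (1 - exp (-a)) * log a - ∫ t in 0..a, exp (-t) * log t := by
  have hdiv := intervalIntegrable_one_sub_exp_neg_div_self ha.le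
  have hlog : IntervalIntegrable (fun t => exp (-t) * log t) volume 0 a :=
    (intervalIntegrable_iff_integrableOn_Ioc_of_le ha.le).mpr
      (integrableOn_exp_neg_mul_log.mono_set Ioc_subset_Ioi_self)
  have hderiv : ∀ t ∈ Ioo 0 a, HasDerivAt (fun t => (1 - exp (-t)) * log t)
      (exp (-t) * log t + (1 - exp (-t)) / t) t := by
    intro t ht
    exact (((hasDerivAt_neg t).exp.const_sub 1).fun_mul (hasDerivAt_log ht.1.ne')).congr_deriv
      (by ring)
  have hcont : ContinuousAt (fun t => (1 - exp (-t)) * log t) a :=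
    (continuous_const.sub (continuous_exp.comp continuous_neg)).continuousAt.mul
      (continuousAt_log ha.ne')
  have h := intervalIntegral.integral_eq_sub_of_hasDerivAt_of_tendsto ha hderiv
    (hlog.add hdiv) tendsto_one_sub_exp_neg_mul_log_nhdsGT_zero
    (hcont.tendsto.mono_left nhdsWithin_le_nhds)
  rw [intervalIntegral.integral_add hlog hdiv] at h
  linarith

/-- For `z > 0`, `E₁ z = -log z - γ + Ein z`, where `Ein z = ∫₀^z (1-e^{-t})/t dt`
and `γ` is the Euler–Mascheroni constant. -/
theorem expInt_eq_neg_log_sub_gamma_add_ein (E₁ Ein : ℝ → ℝ)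
    (hE₁ : ∀ z : ℝ, 0 < z → E₁ z = ∫ t in Set.Ioi (1:ℝ), Real.exp (-t * z) / t)
    (hEin : ∀ z : ℝ, 0 < z → Ein z = ∫ t in (0:ℝ)..z, (1 - Real.exp (-t)) / t) :
    ∀ z : ℝ, 0 < z →
      E₁ z = -Real.log z - Real.eulerMascheroniConstant + Ein z := by
  intro z hz
  have hsplit := intervalIntegral.integral_interval_add_Ioi integrableOn_exp_neg_mul_log
    (integrableOn_exp_neg_mul_log.mono_set (Ioi_subset_Ioi hz.le))
  rw [integral_exp_neg_mul_log] at hsplit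
  have hE₁z : E₁ z = ∫ t in Ioi z, exp (-t) / t := by
    simp_rw [hE₁ z hz, neg_mul]
    simpa only [one_mul] using integral_Ioi_comp_mul_right_div_self (fun u => exp (-u)) 1 hz
  rw [hE₁z, integral_Ioi_exp_neg_div_self hz, hEin z hz, integral_one_sub_exp_neg_div_self hz]
  linear_combination hsplit
end

section
/- Under the same hypotheses as the boundedness of S_μ (σ continuous with 0 < σ_min ≤ σ ≤ σ_max, μ > 0, g bounded measurable, (S_μ g)(x) = μ^{-1} ∫₀^x e^{μ^{-1}τ(x,y)} g(y) dy with τ(x,y)=∫ₓ^y σ), the function S_μ g is differentiable a.e. with |(S_μ g)'(x)| ≤ μ^{-1} (1 + σ_max/σ_min) ‖g‖_∞ for a.e. x ∈ [0,1]. -/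
/-!
Write `F` for a primitive of `σ`, so that `τ x y = F y - F x`. Then
`S x = μ⁻¹ e^{-F x / μ} ∫₀^x e^{F y / μ} g y dy`, and the Lebesgue differentiation theorem,
applied to `σ` and to `e^{F / μ} g`, differentiates both factors at almost every `x`, giving
`S'(x) = μ⁻¹ (g x - μ⁻¹ σ x ∫₀^x e^{τ(x,y)/μ} g y dy)`. Since `τ x y ≤ -σmin (x - y)` for
`y ≤ x`, the weight is dominated by `e^{-σmin (x - y) / μ}`, whose integral is at most `μ / σmin`.
-/

open MeasureTheory Set Real

theorem integral_exp_mul_sub_le {k : ℝ} (hk : 0 < k) (a b : ℝ) :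
    ∫ y in a..b, exp (k * (y - b)) ≤ k⁻¹ := by
  have hderiv (y : ℝ) :
      HasDerivAt (fun y => k⁻¹ * exp (k * (y - b))) (exp (k * (y - b))) y := by
    refine ((((hasDerivAt_id' y).sub_const b).const_mul k).exp.const_mul k⁻¹).congr_deriv ?_
    field_simp
  rw [intervalIntegral.integral_eq_sub_of_hasDerivAt (fun y _ => hderiv y)
    ((by fun_prop : Continuous _).intervalIntegrable a b)]
  simp only [sub_self, mul_zero, exp_zero, mul_one, sub_le_self_iff]
  positivity

theorem abs_intervalIntegral_le_of_abs_le_mul_exp {f : ℝ → ℝ} {k a b M : ℝ} (hk : 0 < k)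
    (hab : a ≤ b) (hf : ∀ y ∈ Icc a b, |f y| ≤ M * exp (k * (y - b))) :
    |∫ y in a..b, f y| ≤ M / k := by
  have hM : 0 ≤ M :=
    nonneg_of_mul_nonneg_left ((abs_nonneg _).trans (hf a ⟨le_rfl, hab⟩)) (exp_pos _)
  rw [← Real.norm_eq_abs]
  calc ‖∫ y in a..b, f y‖ ≤ ∫ y in a..b, M * exp (k * (y - b)) :=
        intervalIntegral.norm_integral_le_of_norm_le hab
          (ae_of_all _ fun y hy => (Real.norm_eq_abs _).trans_le (hf y (Ioc_subset_Icc_self hy)))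
          ((by fun_prop : Continuous fun y => M * exp (k * (y - b))).intervalIntegrable a b)
    _ = M * ∫ y in a..b, exp (k * (y - b)) := intervalIntegral.integral_const_mul _ _
    _ ≤ M / k := mul_le_mul_of_nonneg_left (integral_exp_mul_sub_le hk a b) hM

theorem mul_sub_le_intervalIntegral {f : ℝ → ℝ} {a b c : ℝ} (hab : a ≤ b)
    (hf : IntervalIntegrable f volume a b) (hc : ∀ s ∈ Icc a b, c ≤ f s) :
    c * (b - a) ≤ ∫ s in a..b, f s := by
  simpa [mul_comm] using
    intervalIntegral.integral_mono_on hab intervalIntegrable_const hf hc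

theorem hasDerivAt_integral_exp_mul_sub {F g : ℝ → ℝ} {k c x s : ℝ} (hF : HasDerivAt F s x)
    (hΦ : HasDerivAt (fun x => ∫ y in c..x, exp (k * F y) * g y) (exp (k * F x) * g x) x) :
    HasDerivAt (fun x => ∫ y in c..x, exp (k * (F y - F x)) * g y)
      (g x - k * s * ∫ y in c..x, exp (k * (F y - F x)) * g y) x := by
  have hfactor (x : ℝ) : ∫ y in c..x, exp (k * (F y - F x)) * g y
      = (∫ y in c..x, exp (k * F y) * g y) / exp (k * F x) := by
    rw [← intervalIntegral.integral_div]
    congr 1 with y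
    rw [mul_sub, exp_sub]
    ring
  simp only [hfactor]
  refine (hΦ.div (hF.const_mul k).exp (exp_pos _).ne').congr_deriv ?_
  field_simp

theorem abs_integral_exp_mul_integral_le {σ g : ℝ → ℝ} {k m M a x : ℝ} (hk : 0 < k) (hm : 0 < m)
    (hax : a ≤ x) (hσ : IntervalIntegrable σ volume a x) (hσm : ∀ s ∈ Icc a x, m ≤ σ s)
    (hg : ∀ y ∈ Icc a x, |g y| ≤ M) :
    |∫ y in a..x, exp (k * ∫ s in x..y, σ s) * g y| ≤ M / (k * m) := by
  refine abs_intervalIntegral_le_of_abs_le_mul_exp (by positivity) hax fun y hy => ?_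
  have hσyx : m * (x - y) ≤ ∫ s in y..x, σ s :=
    mul_sub_le_intervalIntegral hy.2 (hσ.mono_set (uIcc_subset_uIcc (Icc_subset_uIcc hy) right_mem_uIcc))
      fun s hs => hσm s ⟨hy.1.trans hs.1, hs.2⟩
  rw [abs_mul, abs_of_pos (exp_pos _), mul_comm, intervalIntegral.integral_symm]
  refine mul_le_mul (hg y hy) (exp_le_exp.2 ?_) (exp_pos _).le ((abs_nonneg _).trans (hg y hy))
  rw [mul_assoc]
  exact mul_le_mul_of_nonneg_left (by linarith) hk.le

theorem ae_hasDerivAt_integral_exp_mul_integral {σ g : ℝ → ℝ} {a b : ℝ} (k : ℝ)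
    (hσ : IntervalIntegrable σ volume a b) (hg : IntervalIntegrable g volume a b) :
    ∀ᵐ x, x ∈ Ioo a b → HasDerivAt (fun x => ∫ y in a..x, exp (k * ∫ s in x..y, σ s) * g y)
      (g x - k * σ x * ∫ y in a..x, exp (k * ∫ s in x..y, σ s) * g y) x := by
  set F : ℝ → ℝ := fun t => ∫ s in a..t, σ s
  have hΦ : IntervalIntegrable (fun y => exp (k * F y) * g y) volume a b :=
    hg.continuousOn_mul
      (continuousOn_const.mul (intervalIntegral.continuousOn_primitive_interval' hσ left_mem_uIcc)).rexp
  have hF {t : ℝ} (ht : t ∈ Ioo a b) :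
      ∫ y in a..t, exp (k * ∫ s in t..y, σ s) * g y = ∫ y in a..t, exp (k * (F y - F t)) * g y := by
    have ht' : t ∈ uIcc a b := Icc_subset_uIcc (Ioo_subset_Icc_self ht)
    refine intervalIntegral.integral_congr fun y hy => ?_
    have hy' : y ∈ uIcc a b := uIcc_subset_uIcc left_mem_uIcc ht' hy
    rw [← intervalIntegral.integral_interval_sub_left (hσ.mono_set (uIcc_subset_uIcc_left hy'))
      (hσ.mono_set (uIcc_subset_uIcc_left ht'))]
  filter_upwards [hσ.ae_hasDerivAt_integral, hΦ.ae_hasDerivAt_integral] with x hFx hΦx hx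
  have hx' : x ∈ uIcc a b := Icc_subset_uIcc (Ioo_subset_Icc_self hx)
  rw [hF hx]
  refine (hasDerivAt_integral_exp_mul_sub (hFx hx' a left_mem_uIcc)
    (hΦx hx' a left_mem_uIcc)).congr_of_eventuallyEq ?_
  filter_upwards [Ioo_mem_nhds hx.1 hx.2] with t ht using hF ht

/-- `S_μ g` is differentiable a.e. on `[0,1]` with
`|(S_μ g)'(x)| ≤ μ⁻¹ (1 + σmax/σmin) ‖g‖_∞`. -/
theorem transport_solop_deriv_bound (σ g : ℝ → ℝ) (σmin σmax μ M : ℝ)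
    (hσmin : 0 < σmin) (hμ : 0 < μ)
    (hσc : ContinuousOn σ (Set.Icc (0:ℝ) 1))
    (hlb : ∀ x ∈ Set.Icc (0:ℝ) 1, σmin ≤ σ x)
    (hub : ∀ x ∈ Set.Icc (0:ℝ) 1, σ x ≤ σmax)
    (hgm : Measurable g) (hgb : ∀ y ∈ Set.Icc (0:ℝ) 1, |g y| ≤ M)
    (τ : ℝ → ℝ → ℝ) (hτ : ∀ x y, τ x y = ∫ s in x..y, σ s)
    (S : ℝ → ℝ) (hS : ∀ x, S x = μ⁻¹ * ∫ y in (0:ℝ)..x, Real.exp (μ⁻¹ * τ x y) * g y) :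
    ∀ᵐ x ∂(volume.restrict (Set.Icc (0:ℝ) 1)),
      ∃ d : ℝ, HasDerivAt S d x ∧ |d| ≤ μ⁻¹ * (1 + σmax / σmin) * M := by
  have hσi : IntervalIntegrable σ volume 0 1 := hσc.intervalIntegrable_of_Icc zero_le_one
  have hgi : IntervalIntegrable g volume 0 1 :=
    (intervalIntegrable_iff_integrableOn_Icc_of_le zero_le_one).2 <|
      .of_bound measure_Icc_lt_top hgm.aestronglyMeasurable M
        (ae_restrict_of_forall_mem measurableSet_Icc hgb)
  have hSσ : S = fun x => μ⁻¹ * ∫ y in (0:ℝ)..x, exp (μ⁻¹ * ∫ s in x..y, σ s) * g y := by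
    funext x
    simp only [hS, hτ]
  have hIoo : ∀ᵐ x ∂(volume.restrict (Icc (0:ℝ) 1)), x ∈ Ioo 0 1 := by
    rw [← Measure.restrict_congr_set Ioo_ae_eq_Icc]
    exact ae_restrict_mem measurableSet_Ioo
  filter_upwards [hIoo, ae_restrict_of_ae (ae_hasDerivAt_integral_exp_mul_integral μ⁻¹ hσi hgi)]
    with x hx hderiv
  have hxI : x ∈ Icc (0:ℝ) 1 := Ioo_subset_Icc_self hx
  refine ⟨_, hSσ ▸ (hderiv hx).const_mul μ⁻¹, ?_⟩
  set K := ∫ y in (0:ℝ)..x, exp (μ⁻¹ * ∫ s in x..y, σ s) * g y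
  have hK : |K| ≤ M / (μ⁻¹ * σmin) := abs_integral_exp_mul_integral_le (g := g) (inv_pos.2 hμ) hσmin hx.1.le
    (hσi.mono_set (uIcc_subset_uIcc_left (Icc_subset_uIcc hxI)))
    (fun s hs => hlb s ⟨hs.1, hs.2.trans hxI.2⟩) (fun y hy => hgb y ⟨hy.1, hy.2.trans hxI.2⟩)
  have hσx : 0 < σ x := hσmin.trans_le (hlb x hxI)
  have hσmax : 0 < σmax := hσx.trans_le (hub x hxI)
  rw [abs_mul, abs_of_pos (inv_pos.2 hμ), mul_assoc μ⁻¹ (1 + σmax / σmin) M]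
  gcongr
  calc |g x - μ⁻¹ * σ x * K| ≤ |g x| + μ⁻¹ * σ x * |K| := by
        simpa only [abs_mul, abs_of_pos hσx, abs_of_pos (inv_pos.2 hμ)] using abs_sub (g x) (μ⁻¹ * σ x * K)
    _ ≤ M + μ⁻¹ * σmax * (M / (μ⁻¹ * σmin)) := by gcongr; exacts [hgb x hxI, hub x hxI]
    _ = (1 + σmax / σmin) * M := by field_simp
end

section
/- Let σ be continuous on [0,1] with 0 < σ_min ≤ σ ≤ σ_max, τ(x,y) = ∫ₓ^y σ, and for μ > 0 define S_μ g as above. Then for every β > 0, every bounded measurable g, and every x ∈ [0,1], ∫₀¹ μ^β |∂_μ (S_μ g)(x)| dμ ≤ 2 β^{-1} σ_min^{-1} ‖g‖_∞. -/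
/-!
Put `t = μ⁻¹ τ(x, y) ≤ 0`. Then `∂_μ S_μ g (x) = -μ⁻² ∫₀ˣ (1 + t) eᵗ g(y) dy`, and
`|(1 + t) eᵗ| ≤ (1 - t) eᵗ ≤ 1` for `t ≤ 0`; the bound `1` also justifies differentiating under
the integral sign. Since `∂_y t = μ⁻¹ σ(y) ≥ μ⁻¹ σmin`, the substitution `y ↦ t` gives
`∫₀ˣ (1 - t) eᵗ dy ≤ μ σmin⁻¹ ∫_{-∞}^0 (1 - t) eᵗ dt = 2 μ σmin⁻¹`. Hence
`|∂_μ S_μ g (x)| ≤ 2 M σmin⁻¹ μ⁻¹`, and `∫₀¹ μ^β μ⁻¹ dμ = β⁻¹`.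
-/

open MeasureTheory Set Real

theorem one_sub_mul_exp_le_one (t : ℝ) : (1 - t) * exp t ≤ 1 :=
  calc (1 - t) * exp t ≤ exp (-t) * exp t := by gcongr; linarith [add_one_le_exp (-t)]
    _ = 1 := by rw [← exp_add, neg_add_cancel, exp_zero]

theorem abs_one_add_mul_exp_le {t : ℝ} (ht : t ≤ 0) : |(1 + t) * exp t| ≤ (1 - t) * exp t := by
  rw [abs_mul, abs_exp]
  gcongr
  exact abs_le.2 ⟨by linarith, by linarith⟩

theorem integral_one_sub_mul_exp_le_two {a : ℝ} (ha : a ≤ 0) :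
    ∫ t in a..0, (1 - t) * exp t ≤ 2 := by
  have hderiv : ∀ t ∈ uIcc a 0, HasDerivAt (fun t => (2 - t) * exp t) ((1 - t) * exp t) t :=
    fun t _ => (((hasDerivAt_id t).const_sub 2).mul (hasDerivAt_exp t)).congr_deriv
      (by simp only [id]; ring)
  rw [intervalIntegral.integral_eq_sub_of_hasDerivAt hderiv
    ((by fun_prop : Continuous fun t => (1 - t) * exp t).intervalIntegrable _ _)]
  have : 0 ≤ (2 - a) * exp a := mul_nonneg (by linarith) (exp_pos a).le
  simp only [sub_zero, exp_zero, mul_one]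
  linarith

theorem hasDerivAt_inv_mul_exp_inv_mul (t : ℝ) {m : ℝ} (hm : m ≠ 0) :
    HasDerivAt (fun m => m⁻¹ * exp (m⁻¹ * t))
      (-(m ^ 2)⁻¹ * ((1 + m⁻¹ * t) * exp (m⁻¹ * t))) m :=
  ((hasDerivAt_inv hm).mul ((hasDerivAt_inv hm).mul_const t).exp).congr_deriv (by ring)

theorem mul_integral_comp_le_integral_of_le_deriv {a b c : ℝ} {φ φ' h : ℝ → ℝ} (hab : a ≤ b)
    (hφ : ContinuousOn φ (Icc a b))
    (hφφ' : ∀ y ∈ Ioo a b, HasDerivWithinAt φ (φ' y) (Ioi y) y)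
    (hφ' : ContinuousOn φ' (Icc a b)) (hc : ∀ y ∈ Icc a b, c ≤ φ' y)
    (hh : Continuous h) (hh0 : ∀ y ∈ Icc a b, 0 ≤ h (φ y)) :
    c * ∫ y in a..b, h (φ y) ≤ ∫ t in φ a..φ b, h t := by
  rw [← uIcc_of_le hab] at hφ hφ'
  have hhφ : ContinuousOn (fun y => h (φ y)) (uIcc a b) := hh.comp_continuousOn hφ
  rw [← intervalIntegral.integral_const_mul, ← intervalIntegral.integral_comp_mul_deriv''
    hφ (by rwa [min_eq_left hab, max_eq_right hab]) hφ' hh.continuousOn]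
  refine intervalIntegral.integral_mono_on hab (continuousOn_const.mul hhφ).intervalIntegrable
    (hhφ.mul hφ').intervalIntegrable fun y hy => ?_
  rw [mul_comm]
  exact mul_le_mul_of_nonneg_left (hc y hy) (hh0 y hy)

theorem intervalIntegrable_of_abs_le {g : ℝ → ℝ} {a b M : ℝ} (hab : a ≤ b) (hg : Measurable g)
    (hgM : ∀ y ∈ Icc a b, |g y| ≤ M) : IntervalIntegrable g volume a b := by
  rw [intervalIntegrable_iff, uIoc_of_le hab]
  refine IntegrableOn.of_bound measure_Ioc_lt_top hg.aestronglyMeasurable M ?_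
  filter_upwards [ae_restrict_mem measurableSet_Ioc] with y hy
  exact hgM y (Ioc_subset_Icc_self hy)

theorem integral_rpow_mul_abs_le {f : ℝ → ℝ} {β C : ℝ} (hβ : 0 < β) (hf : Measurable f)
    (hfC : ∀ μ ∈ Ioc (0 : ℝ) 1, |f μ| ≤ C * μ⁻¹) :
    ∫ μ in (0 : ℝ)..1, μ ^ β * |f μ| ≤ C * β⁻¹ := by
  have hbound : ∀ μ ∈ Ioc (0 : ℝ) 1, μ ^ β * |f μ| ≤ C * μ ^ (β - 1) := fun μ hμ =>
    calc μ ^ β * |f μ| ≤ μ ^ β * (C * μ⁻¹) :=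
          mul_le_mul_of_nonneg_left (hfC μ hμ) (rpow_nonneg hμ.1.le β)
      _ = C * μ ^ (β - 1) := by rw [rpow_sub_one hμ.1.ne']; ring
  have hint : IntervalIntegrable (fun μ => C * μ ^ (β - 1)) volume 0 1 :=
    (intervalIntegral.intervalIntegrable_rpow' (by linarith)).const_mul C
  have hint' : IntervalIntegrable (fun μ => μ ^ β * |f μ|) volume 0 1 := by
    rw [intervalIntegrable_iff_integrableOn_Ioc_of_le zero_le_one] at hint ⊢
    refine hint.mono' (by fun_prop : Measurable fun μ : ℝ => μ ^ β * |f μ|).aestronglyMeasurable ?_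
    filter_upwards [ae_restrict_mem measurableSet_Ioc] with μ hμ
    rw [Real.norm_of_nonneg (mul_nonneg (rpow_nonneg hμ.1.le β) (abs_nonneg _))]
    exact hbound μ hμ
  calc ∫ μ in (0 : ℝ)..1, μ ^ β * |f μ| ≤ ∫ μ in (0 : ℝ)..1, C * μ ^ (β - 1) :=
        intervalIntegral.integral_mono_on_of_le_Ioo zero_le_one hint' hint
          fun μ hμ => hbound μ (Ioo_subset_Ioc_self hμ)
    _ = C * β⁻¹ := by
        rw [intervalIntegral.integral_const_mul, integral_rpow (Or.inl (by linarith))]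
        simp [hβ.ne']

theorem hasDerivAt_inv_mul_integral_exp_inv_mul {a b μ M : ℝ} {T g : ℝ → ℝ} (hab : a ≤ b)
    (hμ : 0 < μ) (hT : ContinuousOn T (Icc a b)) (hT0 : ∀ y ∈ Icc a b, T y ≤ 0)
    (hg : Measurable g) (hgM : ∀ y ∈ Icc a b, |g y| ≤ M) :
    HasDerivAt (fun m => m⁻¹ * ∫ y in a..b, exp (m⁻¹ * T y) * g y)
      (-(μ ^ 2)⁻¹ * ∫ y in a..b, (1 + μ⁻¹ * T y) * exp (μ⁻¹ * T y) * g y) μ := by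
  set K : ℝ → ℝ → ℝ := fun m t => m⁻¹ * exp (m⁻¹ * t)
  set K' : ℝ → ℝ → ℝ := fun m t => -(m ^ 2)⁻¹ * ((1 + m⁻¹ * t) * exp (m⁻¹ * t))
  have hKT_int : ∀ G : ℝ → ℝ, Continuous G →
      IntervalIntegrable (fun y => G (T y) * g y) volume a b := fun G hG =>
    (intervalIntegrable_of_abs_le hab hg hgM).continuousOn_mul
      (hG.comp_continuousOn (by rwa [uIcc_of_le hab]))
  have hK'_le : ∀ y ∈ uIoc a b, ∀ m ∈ Ioi (μ / 2),
      ‖K' m (T y) * g y‖ ≤ ((μ / 2) ^ 2)⁻¹ * M := by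
    intro y hy m hm
    rw [uIoc_of_le hab] at hy
    have hy' := Ioc_subset_Icc_self hy
    have hm0 : 0 < m := (half_pos hμ).trans hm
    have hkernel : |(1 + m⁻¹ * T y) * exp (m⁻¹ * T y)| ≤ 1 :=
      (abs_one_add_mul_exp_le (mul_nonpos_of_nonneg_of_nonpos (inv_nonneg.2 hm0.le)
        (hT0 y hy'))).trans (one_sub_mul_exp_le_one _)
    have hm2 : (m ^ 2)⁻¹ ≤ ((μ / 2) ^ 2)⁻¹ := by gcongr; exact hm.le
    have hgy := hgM y hy'
    rw [Real.norm_eq_abs, abs_mul, abs_mul, abs_neg, abs_of_pos (by positivity : 0 < (m ^ 2)⁻¹)]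
    calc (m ^ 2)⁻¹ * |(1 + m⁻¹ * T y) * exp (m⁻¹ * T y)| * |g y|
        ≤ ((μ / 2) ^ 2)⁻¹ * 1 * M := by gcongr
      _ = ((μ / 2) ^ 2)⁻¹ * M := by ring
  have key := intervalIntegral.hasDerivAt_integral_of_dominated_loc_of_deriv_le
    (F := fun m y => K m (T y) * g y) (F' := fun m y => K' m (T y) * g y)
    (bound := fun _ => ((μ / 2) ^ 2)⁻¹ * M) (Ioi_mem_nhds (half_lt_self hμ))
    (.of_forall fun m => (hKT_int (K m) (by fun_prop)).def'.aestronglyMeasurable)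
    (hKT_int (K μ) (by fun_prop)) (hKT_int (K' μ) (by fun_prop)).def'.aestronglyMeasurable
    (.of_forall hK'_le) intervalIntegrable_const
    (.of_forall fun y _ m hm =>
      (hasDerivAt_inv_mul_exp_inv_mul (T y) ((half_pos hμ).trans hm).ne').mul_const (g y))
  have hS : (fun m => m⁻¹ * ∫ y in a..b, exp (m⁻¹ * T y) * g y) =
      fun m => ∫ y in a..b, K m (T y) * g y := by
    funext m
    simp only [K, mul_assoc, intervalIntegral.integral_const_mul]
  have hS' : -(μ ^ 2)⁻¹ * ∫ y in a..b, (1 + μ⁻¹ * T y) * exp (μ⁻¹ * T y) * g y =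
      ∫ y in a..b, K' μ (T y) * g y := by
    simp only [K', mul_assoc, intervalIntegral.integral_const_mul]
  rw [hS, hS']
  exact key.2

section Primitive

variable {σ : ℝ → ℝ} {a b : ℝ}

theorem primitive_nonpos_of_nonneg (hσ : ∀ s ∈ Icc a b, 0 ≤ σ s) {y : ℝ} (hy : y ∈ Icc a b) :
    ∫ s in b..y, σ s ≤ 0 := by
  rw [intervalIntegral.integral_symm, neg_nonpos]
  exact intervalIntegral.integral_nonneg hy.2 fun s hs => hσ s ⟨hy.1.trans hs.1, hs.2⟩

theorem continuousOn_primitive_Icc (hab : a ≤ b) (hσ : ContinuousOn σ (Icc a b)) :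
    ContinuousOn (fun y => ∫ s in b..y, σ s) (Icc a b) := by
  rw [← uIcc_of_le hab] at hσ ⊢
  exact intervalIntegral.continuousOn_primitive_interval' hσ.intervalIntegrable right_mem_uIcc

theorem hasDerivAt_primitive_of_mem_Ioo (hσ : ContinuousOn σ (Icc a b)) {y : ℝ}
    (hy : y ∈ Ioo a b) : HasDerivAt (fun y => ∫ s in b..y, σ s) (σ y) y := by
  have hσ' : ContinuousOn σ (Ioo a b) := hσ.mono Ioo_subset_Icc_self
  refine intervalIntegral.integral_hasDerivAt_right ?_
    (hσ'.stronglyMeasurableAtFilter isOpen_Ioo y hy) (hσ'.continuousAt (isOpen_Ioo.mem_nhds hy))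
  refine (hσ.mono ?_).intervalIntegrable
  rw [uIcc_comm, uIcc_of_le hy.2.le]
  exact Icc_subset_Icc hy.1.le le_rfl

variable {σmin μ : ℝ}

theorem integral_one_sub_mul_exp_primitive_le (hab : a ≤ b) (hμ : 0 < μ) (hσmin : 0 < σmin)
    (hσ : ContinuousOn σ (Icc a b)) (hlb : ∀ y ∈ Icc a b, σmin ≤ σ y) :
    ∫ y in a..b, (1 - μ⁻¹ * ∫ s in b..y, σ s) * exp (μ⁻¹ * ∫ s in b..y, σ s) ≤
      2 * μ * σmin⁻¹ := by
  set φ : ℝ → ℝ := fun y => μ⁻¹ * ∫ s in b..y, σ s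
  have hφ0 : ∀ y ∈ Icc a b, φ y ≤ 0 := fun y hy => mul_nonpos_of_nonneg_of_nonpos
    (inv_nonneg.2 hμ.le) (primitive_nonpos_of_nonneg (fun s hs => hσmin.le.trans (hlb s hs)) hy)
  have hsubst := mul_integral_comp_le_integral_of_le_deriv (c := μ⁻¹ * σmin) (φ := φ)
    (h := fun t => (1 - t) * exp t) (φ' := fun y => μ⁻¹ * σ y) hab
    (continuousOn_const.mul (continuousOn_primitive_Icc hab hσ))
    (fun y hy => ((hasDerivAt_primitive_of_mem_Ioo hσ hy).const_mul μ⁻¹).hasDerivWithinAt)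
    (continuousOn_const.mul hσ) (fun y hy => by gcongr; exact hlb y hy) (by fun_prop)
    (fun y hy => mul_nonneg (by linarith [hφ0 y hy]) (exp_pos _).le)
  have hφb : φ b = 0 := by simp [φ]
  rw [hφb] at hsubst
  have h2 := hsubst.trans (integral_one_sub_mul_exp_le_two (hφ0 a ⟨le_rfl, hab⟩))
  rw [← le_div_iff₀' (by positivity)] at h2
  calc _ ≤ 2 / (μ⁻¹ * σmin) := h2
    _ = 2 * μ * σmin⁻¹ := by field_simp

theorem abs_deriv_inv_mul_integral_exp_primitive_le {g : ℝ → ℝ} {M : ℝ}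
    (hab : a ≤ b) (hμ : 0 < μ) (hσmin : 0 < σmin) (hσ : ContinuousOn σ (Icc a b))
    (hlb : ∀ y ∈ Icc a b, σmin ≤ σ y) (hg : Measurable g) (hgM : ∀ y ∈ Icc a b, |g y| ≤ M) :
    |deriv (fun m => m⁻¹ * ∫ y in a..b, exp (m⁻¹ * ∫ s in b..y, σ s) * g y) μ| ≤
      2 * M * σmin⁻¹ * μ⁻¹ := by
  set T : ℝ → ℝ := fun y => ∫ s in b..y, σ s
  have hT : ContinuousOn T (Icc a b) := continuousOn_primitive_Icc hab hσ
  have hT0 : ∀ y ∈ Icc a b, T y ≤ 0 := fun _ =>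
    primitive_nonpos_of_nonneg fun s hs => hσmin.le.trans (hlb s hs)
  have hμT0 : ∀ y ∈ Icc a b, μ⁻¹ * T y ≤ 0 := fun y hy =>
    mul_nonpos_of_nonneg_of_nonpos (inv_nonneg.2 hμ.le) (hT0 y hy)
  have hM : 0 ≤ M := (abs_nonneg _).trans (hgM a ⟨le_rfl, hab⟩)
  have hI : |∫ y in a..b, (1 + μ⁻¹ * T y) * exp (μ⁻¹ * T y) * g y| ≤
      M * ∫ y in a..b, (1 - μ⁻¹ * T y) * exp (μ⁻¹ * T y) := by
    rw [← intervalIntegral.integral_const_mul, ← Real.norm_eq_abs]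
    refine intervalIntegral.norm_integral_le_of_norm_le hab (.of_forall fun y hy => ?_)
      (ContinuousOn.intervalIntegrable (μ := volume) ?_)
    · rw [Real.norm_eq_abs, abs_mul, mul_comm M]
      have hy' := Ioc_subset_Icc_self hy
      exact mul_le_mul (abs_one_add_mul_exp_le (hμT0 y hy')) (hgM y hy') (abs_nonneg _)
        (mul_nonneg (by linarith [hμT0 y hy']) (exp_pos _).le)
    · rw [uIcc_of_le hab]
      fun_prop
  have hI' : |∫ y in a..b, (1 + μ⁻¹ * T y) * exp (μ⁻¹ * T y) * g y| ≤ M * (2 * μ * σmin⁻¹) :=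
    hI.trans (mul_le_mul_of_nonneg_left
      (integral_one_sub_mul_exp_primitive_le hab hμ hσmin hσ hlb) hM)
  rw [(hasDerivAt_inv_mul_integral_exp_inv_mul hab hμ hT hT0 hg hgM).deriv, abs_mul, abs_neg,
    abs_of_pos (by positivity)]
  calc (μ ^ 2)⁻¹ * _ ≤ (μ ^ 2)⁻¹ * (M * (2 * μ * σmin⁻¹)) := by gcongr
    _ = 2 * M * σmin⁻¹ * μ⁻¹ := by field_simp

end Primitive

theorem transport_solop_mu_deriv_bound_general (σ g : ℝ → ℝ) (σmin M : ℝ)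
    (hσmin : 0 < σmin)
    (hσc : ContinuousOn σ (Set.Icc (0:ℝ) 1))
    (hlb : ∀ x ∈ Set.Icc (0:ℝ) 1, σmin ≤ σ x)
    (hgm : Measurable g) (hgb : ∀ y ∈ Set.Icc (0:ℝ) 1, |g y| ≤ M)
    (τ : ℝ → ℝ → ℝ) (hτ : ∀ x y, τ x y = ∫ s in x..y, σ s)
    (S : ℝ → ℝ → ℝ)
    (hS : ∀ μ x, S μ x = μ⁻¹ * ∫ y in (0:ℝ)..x, Real.exp (μ⁻¹ * τ x y) * g y) :
    ∀ β : ℝ, 0 < β → ∀ x ∈ Set.Icc (0:ℝ) 1,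
      (∫ μ in (0:ℝ)..1, μ ^ β * |deriv (fun m => S m x) μ|) ≤
        2 * β⁻¹ * σmin⁻¹ * M := by
  intro β hβ x hx
  have hsub : Icc 0 x ⊆ Icc (0 : ℝ) 1 := Icc_subset_Icc le_rfl hx.2
  calc _ ≤ 2 * M * σmin⁻¹ * β⁻¹ := integral_rpow_mul_abs_le hβ (measurable_deriv _) fun μ hμ => by
        simp only [hS, hτ]
        exact abs_deriv_inv_mul_integral_exp_primitive_le hx.1 hμ.1 hσmin (hσc.mono hsub)
          (fun y hy => hlb y (hsub hy)) hgm (fun y hy => hgb y (hsub hy))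
    _ = 2 * β⁻¹ * σmin⁻¹ * M := by ring

/-- Weighted integrability of the μ-derivative of the transport solution operator:
`∫₀¹ μ^β |∂_μ (S_μ g)(x)| dμ ≤ 2 β⁻¹ σmin⁻¹ ‖g‖_∞`. -/
theorem transport_solop_mu_deriv_bound (σ g : ℝ → ℝ) (σmin σmax M : ℝ)
    (hσmin : 0 < σmin)
    (hσc : ContinuousOn σ (Set.Icc (0:ℝ) 1))
    (hlb : ∀ x ∈ Set.Icc (0:ℝ) 1, σmin ≤ σ x)
    (hub : ∀ x ∈ Set.Icc (0:ℝ) 1, σ x ≤ σmax)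
    (hgm : Measurable g) (hgb : ∀ y ∈ Set.Icc (0:ℝ) 1, |g y| ≤ M)
    (τ : ℝ → ℝ → ℝ) (hτ : ∀ x y, τ x y = ∫ s in x..y, σ s)
    (S : ℝ → ℝ → ℝ)
    (hS : ∀ μ x, S μ x = μ⁻¹ * ∫ y in (0:ℝ)..x, Real.exp (μ⁻¹ * τ x y) * g y) :
    ∀ β : ℝ, 0 < β → ∀ x ∈ Set.Icc (0:ℝ) 1,
      (∫ μ in (0:ℝ)..1, μ ^ β * |deriv (fun m => S m x) μ|) ≤
        2 * β⁻¹ * σmin⁻¹ * M :=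
  transport_solop_mu_deriv_bound_general σ g σmin M hσmin hσc hlb hgm hgb τ hτ S hS
end

section
/- Let w_k, μ_k (k = 1,…,N) be the weights and nodes of the N-point Gauss–Legendre rule on [0,1], with N ≥ 2. Suppose μ_1 ≥ c₁ N^{-2} for a constant c₁ > 0 and the quadrature error bound |∫₀¹ g − Σ w_k g(μ_k)| ≤ c N^{-1} ∫₀¹ [μ(1−μ)]^{1/2} |g'(μ)| dμ holds. Then applying this with g(μ) = 1/μ truncated appropriately, one obtains Σ_{k=1}^N w_k μ_k^{-1} ≤ C (1 + log N) for a constant C independent of N. -/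
/-! Test the quadrature bound with `g x = x / (x ^ 2 + δ ^ 2)`, `δ = μ₁`, a smooth substitute for
`1 / x`. At the nodes, which all lie above `δ`, `1 / x ≤ 2 g x`; moreover `∫₀¹ g ≤ 1/2 - log δ`, and
`|g' x| ≤ 2 / (x + δ) ^ 2` gives `∫₀¹ √(x (1 - x)) |g'| ≤ 4 / √δ`. Since `δ ≥ c₁ / N ^ 2`, the
integral contributes `O(log N)` and the quadrature error `c N⁻¹ · 4 / √δ` only `O(1)`. -/

noncomputable def truncatedInv (δ x : ℝ) : ℝ := x / (x ^ 2 + δ ^ 2)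

section truncatedInv

variable {δ : ℝ}

lemma hasDerivAt_truncatedInv (hδ : δ ≠ 0) (x : ℝ) :
    HasDerivAt (truncatedInv δ) ((δ ^ 2 - x ^ 2) / (x ^ 2 + δ ^ 2) ^ 2) x := by
  refine ((hasDerivAt_id x).div ((hasDerivAt_pow 2 x).add_const (δ ^ 2))
    (by positivity)).congr_deriv ?_
  simp only [id_eq, Nat.cast_ofNat]
  ring

lemma contDiff_truncatedInv (hδ : δ ≠ 0) : ContDiff ℝ 1 (truncatedInv δ) :=
  contDiff_id.div ((contDiff_id.pow 2).add contDiff_const) (fun x => by positivity)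

lemma abs_deriv_truncatedInv_le (hδ : δ ≠ 0) (x : ℝ) :
    |deriv (truncatedInv δ) x| ≤ (x ^ 2 + δ ^ 2)⁻¹ := by
  have hpos : 0 < x ^ 2 + δ ^ 2 := by positivity
  rw [(hasDerivAt_truncatedInv hδ x).deriv, abs_div, abs_of_pos (pow_pos hpos 2),
    div_le_iff₀ (pow_pos hpos 2), sq (x ^ 2 + δ ^ 2), ← mul_assoc, inv_mul_cancel₀ hpos.ne',
    one_mul]
  exact abs_le.2 ⟨by linarith [sq_nonneg δ], by linarith [sq_nonneg x]⟩

lemma inv_le_two_mul_truncatedInv {x : ℝ} (hδ : 0 ≤ δ) (hδx : δ ≤ x) (hx : 0 < x) :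
    x⁻¹ ≤ 2 * truncatedInv δ x := by
  rw [truncatedInv, ← mul_div_assoc, inv_le_comm₀ hx (by positivity), inv_div,
    div_le_iff₀ (by positivity)]
  nlinarith

lemma integral_truncatedInv (hδ : δ ≠ 0) :
    ∫ x in (0:ℝ)..1, truncatedInv δ x = (Real.log (1 + δ ^ 2) - Real.log (δ ^ 2)) / 2 := by
  have hderiv : ∀ x, HasDerivAt (fun x => Real.log (x ^ 2 + δ ^ 2) / 2) (truncatedInv δ x) x := by
    intro x
    refine ((((hasDerivAt_pow 2 x).add_const (δ ^ 2)).log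
      (by positivity)).div_const 2).congr_deriv ?_
    rw [truncatedInv]
    field_simp
    ring
  rw [intervalIntegral.integral_eq_sub_of_hasDerivAt (fun x _ => hderiv x)
    ((contDiff_truncatedInv hδ).continuous.intervalIntegrable 0 1)]
  simp only [one_pow, zero_pow two_ne_zero, zero_add]
  ring

lemma integral_truncatedInv_le (hδ : 0 < δ) (hδ1 : δ ≤ 1) :
    ∫ x in (0:ℝ)..1, truncatedInv δ x ≤ 1 / 2 - Real.log δ := by
  have hlog : Real.log (1 + δ ^ 2) ≤ δ ^ 2 := by
    linarith [Real.log_le_sub_one_of_pos (by positivity : 0 < 1 + δ ^ 2)]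
  rw [integral_truncatedInv hδ.ne', Real.log_pow]
  nlinarith

lemma continuous_deriv_truncatedInv (hδ : δ ≠ 0) : Continuous (deriv (truncatedInv δ)) := by
  rw [funext fun x => (hasDerivAt_truncatedInv hδ x).deriv]
  exact Continuous.div (by fun_prop) (by fun_prop) fun x => by positivity

lemma weighted_abs_deriv_truncatedInv_le (hδ : 0 < δ) {x : ℝ} (hx : x ∈ Set.Icc (0:ℝ) 1) :
    (x * (1 - x)) ^ ((1:ℝ)/2) * |deriv (truncatedInv δ) x| ≤ 2 * (x + δ) ^ (-(3:ℝ)/2) := by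
  obtain ⟨hx0, hx1⟩ := hx
  have hy : 0 < x + δ := by linarith
  have hweight : (x * (1 - x)) ^ ((1:ℝ)/2) ≤ (x + δ) ^ ((1:ℝ)/2) :=
    Real.rpow_le_rpow (by nlinarith) (by nlinarith) (by norm_num)
  have hderiv : |deriv (truncatedInv δ) x| ≤ 2 / (x + δ) ^ (2:ℝ) := by
    refine (abs_deriv_truncatedInv_le hδ.ne' x).trans ?_
    rw [Real.rpow_two, inv_eq_one_div, div_le_div_iff₀ (by positivity) (by positivity)]
    nlinarith [sq_nonneg (x - δ)]
  calc (x * (1 - x)) ^ ((1:ℝ)/2) * |deriv (truncatedInv δ) x|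
      ≤ (x + δ) ^ ((1:ℝ)/2) * (2 / (x + δ) ^ (2:ℝ)) :=
        mul_le_mul hweight hderiv (abs_nonneg _) (by positivity)
    _ = 2 * (x + δ) ^ (-(3:ℝ)/2) := by
        rw [show -(3:ℝ)/2 = 1/2 - 2 by norm_num, Real.rpow_sub hy]
        ring

lemma integral_add_rpow_neg_three_halves_le (hδ : 0 < δ) :
    ∫ x in (0:ℝ)..1, (x + δ) ^ (-(3:ℝ)/2) ≤ 2 / √δ := by
  rw [intervalIntegral.integral_comp_add_right (fun x => x ^ (-(3:ℝ)/2)), integral_rpow]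
  · have hexp : -(3:ℝ)/2 + 1 = -(1/2) := by norm_num
    have hlow : (0 + δ) ^ (-(1:ℝ)/2) = 1 / √δ := by
      rw [zero_add, neg_div, Real.rpow_neg hδ.le, Real.sqrt_eq_rpow, inv_eq_one_div]
    have hup : 0 ≤ (1 + δ) ^ (-(1:ℝ)/2) := by positivity
    rw [hexp, ← neg_div, hlow]
    have hring : ((1 + δ) ^ (-(1:ℝ)/2) - 1 / √δ) / (-1 / 2) =
        2 / √δ - 2 * (1 + δ) ^ (-(1:ℝ)/2) := by
      ring
    linarith
  · refine Or.inr ⟨by norm_num, fun h => ?_⟩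
    rcases Set.mem_uIcc.1 h with h | h <;> linarith [h.1, h.2]

lemma integral_weighted_abs_deriv_truncatedInv_le (hδ : 0 < δ) :
    ∫ x in (0:ℝ)..1, (x * (1 - x)) ^ ((1:ℝ)/2) * |deriv (truncatedInv δ) x| ≤ 4 / √δ := by
  have hcont : Continuous fun x : ℝ => (x * (1 - x)) ^ ((1:ℝ)/2) * |deriv (truncatedInv δ) x| :=
    ((by fun_prop : Continuous fun x : ℝ => x * (1 - x)).rpow_const
      fun _ => Or.inr (by norm_num)).mul (continuous_deriv_truncatedInv hδ.ne').abs
  have hbound : ContinuousOn (fun x : ℝ => 2 * (x + δ) ^ (-(3:ℝ)/2)) (Set.uIcc 0 1) := by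
    refine continuousOn_const.mul (ContinuousOn.rpow_const (by fun_prop) fun x hx => Or.inl ?_)
    rw [Set.uIcc_of_le zero_le_one] at hx
    exact (by linarith [hx.1] : 0 < x + δ).ne'
  calc _ ≤ ∫ x in (0:ℝ)..1, 2 * (x + δ) ^ (-(3:ℝ)/2) :=
        intervalIntegral.integral_mono_on zero_le_one (hcont.intervalIntegrable 0 1)
          hbound.intervalIntegrable fun x hx => weighted_abs_deriv_truncatedInv_le hδ hx
    _ ≤ 4 / √δ := by
        rw [intervalIntegral.integral_const_mul, show (4:ℝ) / √δ = 2 * (2 / √δ) by ring]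
        gcongr
        exact integral_add_rpow_neg_three_halves_le hδ

end truncatedInv

lemma sum_div_le_two_mul_sum_truncatedInv {ι : Type*} (s : Finset ι) {w μ : ι → ℝ} {δ : ℝ}
    (hδ : 0 < δ) (hw : ∀ k ∈ s, 0 ≤ w k) (hδμ : ∀ k ∈ s, δ ≤ μ k) :
    ∑ k ∈ s, w k / μ k ≤ 2 * ∑ k ∈ s, w k * truncatedInv δ (μ k) := by
  rw [Finset.mul_sum]
  refine Finset.sum_le_sum fun k hk => ?_
  calc w k / μ k = w k * (μ k)⁻¹ := div_eq_mul_inv _ _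
    _ ≤ w k * (2 * truncatedInv δ (μ k)) := by
        gcongr
        · exact hw k hk
        · exact inv_le_two_mul_truncatedInv hδ.le (hδμ k hk) (hδ.trans_le (hδμ k hk))
    _ = 2 * (w k * truncatedInv δ (μ k)) := by ring

section LowerBound

variable {a n δ : ℝ}

lemma neg_log_le_of_mul_inv_sq_le (ha : 0 < a) (hn : 0 < n) (h : a * (n ^ 2)⁻¹ ≤ δ) :
    -Real.log δ ≤ 2 * Real.log n - Real.log a := by
  have hlog := Real.log_le_log (by positivity) h
  rw [Real.log_mul ha.ne' (by positivity), Real.log_inv, Real.log_pow] at hlog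
  push_cast at hlog
  linarith

lemma sqrt_le_sqrt_mul_of_mul_inv_sq_le (ha : 0 < a) (hn : 0 < n) (h : a * (n ^ 2)⁻¹ ≤ δ) :
    √a ≤ √δ * n := by
  have hsqrt := Real.sqrt_le_sqrt h
  rwa [Real.sqrt_mul ha.le, Real.sqrt_inv, Real.sqrt_sq hn.le, mul_inv_le_iff₀ hn] at hsqrt

end LowerBound

/-- Bound `Σ_{k=1}^N w_k / μ_k ≤ C (1 + log N)` for Gauss–Legendre-type rules on `[0,1]`,
with `C` independent of `N`. -/
theorem gauss_weight_node_sum_bound (c c₁ : ℝ) (hc : 0 < c) (hc₁ : 0 < c₁) :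
    ∃ C : ℝ, ∀ N : ℕ, 2 ≤ N → ∀ w μn : ℕ → ℝ,
      (∀ k, 1 ≤ k → k ≤ N → 0 < w k) →
      (∑ k ∈ Finset.Icc 1 N, w k) = 1 →
      (∀ k, 1 ≤ k → k ≤ N → μn k ∈ Set.Ioo (0:ℝ) 1) →
      (∀ k j, 1 ≤ k → k ≤ j → j ≤ N → μn k ≤ μn j) →
      c₁ * ((N : ℝ) ^ 2)⁻¹ ≤ μn 1 →
      (∀ g : ℝ → ℝ, ContDiff ℝ 1 g →
        |(∫ x in (0:ℝ)..1, g x) - ∑ k ∈ Finset.Icc 1 N, w k * g (μn k)| ≤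
          c * (N : ℝ)⁻¹ * ∫ x in (0:ℝ)..1, (x * (1 - x)) ^ ((1:ℝ)/2) * |deriv g x|) →
      (∑ k ∈ Finset.Icc 1 N, w k / μn k) ≤ C * (1 + Real.log N) := by
  refine ⟨4 + 2 * |Real.log c₁| + 8 * (c / √c₁), ?_⟩
  intro N hN w μn hw _ hμ hmono hμ1 hquad
  have hN1 : (1:ℝ) ≤ N := by exact_mod_cast (by omega : 1 ≤ N)
  have hN0 : (0:ℝ) < N := by linarith
  obtain ⟨hδ0, hδ1⟩ := hμ 1 le_rfl (by omega)
  have hnodes := sum_div_le_two_mul_sum_truncatedInv (Finset.Icc 1 N) hδ0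
    (fun k hk => (hw k (Finset.mem_Icc.1 hk).1 (Finset.mem_Icc.1 hk).2).le)
    (fun k hk => hmono 1 k le_rfl (Finset.mem_Icc.1 hk).1 (Finset.mem_Icc.1 hk).2)
  have hrule := (abs_le.1 (hquad _ (contDiff_truncatedInv hδ0.ne'))).1
  have hintegral := integral_truncatedInv_le hδ0 hδ1.le
  have herror : c * (N : ℝ)⁻¹ * ∫ x in (0:ℝ)..1,
      (x * (1 - x)) ^ ((1:ℝ)/2) * |deriv (truncatedInv (μn 1)) x| ≤ 4 * (c / √c₁) := by
    have hsqrt := sqrt_le_sqrt_mul_of_mul_inv_sq_le hc₁ hN0 hμ1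
    calc _ ≤ c * (N : ℝ)⁻¹ * (4 / √(μn 1)) := by
          gcongr
          exact integral_weighted_abs_deriv_truncatedInv_le hδ0
      _ = 4 * (c / (√(μn 1) * N)) := by field_simp
      _ ≤ 4 * (c / √c₁) := by gcongr
  have hlog := neg_log_le_of_mul_inv_sq_le hc₁ hN0 hμ1
  have hlogN : 0 ≤ Real.log N := Real.log_nonneg hN1
  have hconst : 0 ≤ c / √c₁ := by positivity
  linarith [neg_le_abs (Real.log c₁), mul_nonneg (abs_nonneg (Real.log c₁)) hlogN,
    mul_nonneg hconst hlogN]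
end
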